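/- Let X ⊆ [0,1]^d be measurable and let P^s_i(y) be a pyramid. Then for any u ∈ R^d, |vol(X ∩ P^s_i(y)) - vol(X ∩ P^s_i(y+u))| ≤ √(8d³)·‖u‖_∞. -/

import Mathlib

/-!
The pyramid `Pyr s i w` is the intersection of the half-spaces `⟪n, w⟫ ≤ ⟪n, z⟫` over the
normals `n = s eᵢ ± eⱼ`. A point of `Pyr s i w` outside `Pyr s i w'` thus lies, for one of these
normals, in the slab between the hyperplanes through `w` and `w'`. Inside the unit cube a slab
has volume at most its width divided by any nonzero coefficient `|nₖ|` of its normal (shear the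
cube along the `k`-th coordinate), so the `2(d - 1)` slabs with `j ≠ i` contribute at most
`2‖w' - w‖` each and the two with `j = i` at most `‖w' - w‖` each. This elementary bound
replaces Ball's slicing theorem and yields `(4d - 2)‖u‖ ≤ √(8d³)‖u‖`.
-/

open MeasureTheory

/-- The `s`-pyramid in direction `i` around `y` (ℓ∞-norm). -/
def Pyr {d : ℕ} (s : ℝ) (i : Fin d) (y : Fin d → ℝ) : Set (Fin d → ℝ) :=
  {z | s * (z i - y i) = ‖z - y‖}

open Set Matrix

theorem mul_le_abs_of_eq_one_or_eq_neg_one {s : ℝ} (hs : s = 1 ∨ s = -1) (a : ℝ) :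
    s * a ≤ |a| :=
  (le_abs_self _).trans_eq (by rcases hs with rfl | rfl <;> simp)

theorem abs_apply_le_norm {ι : Type*} [Fintype ι] (z : ι → ℝ) (j : ι) : |z j| ≤ ‖z‖ :=
  norm_le_pi_norm z j

theorem Matrix.det_one_updateRow {ι R : Type*} [Fintype ι] [DecidableEq ι] [CommRing R]
    (j : ι) (c : ι → R) : ((1 : Matrix ι ι R).updateRow j c).det = c j := by
  have hc : ∑ k, c k • (1 : Matrix ι ι R) k = c := by
    ext; simp [Matrix.one_apply]
  calc _ = ((1 : Matrix ι ι R).updateRow j (∑ k, c k • (1 : Matrix ι ι R) k)).det := by rw [hc]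
    _ = c j := by rw [det_updateRow_sum, det_one, smul_eq_mul, mul_one]

section Cube

variable {ι : Type*} [Fintype ι] [DecidableEq ι]

theorem volume_pi_update_Icc (j : ι) (I : Set ℝ) :
    volume (univ.pi (Function.update (fun _ ↦ Icc (0 : ℝ) 1) j I)) = volume I := by
  rw [volume_pi_pi, Finset.prod_eq_single j (fun k _ hk ↦ by simp [hk]) (by simp)]
  simp

theorem volume_Icc_inter_dotProduct_mem_Ico_le (c : ι → ℝ) {j : ι} (hj : c j ≠ 0) (a b : ℝ) :
    volume (Icc 0 1 ∩ {z : ι → ℝ | c ⬝ᵥ z ∈ Ico a b}) ≤ ENNReal.ofReal ((b - a) / |c j|) := by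
  set T := Matrix.toLin' ((1 : Matrix ι ι ℝ).updateRow j c)
  have hT : ∀ z, T z = Function.update z j (c ⬝ᵥ z) := fun z ↦ by
    simp [T, updateRow_mulVec]
  have hdet : LinearMap.det T = c j := by rw [LinearMap.det_toLin', det_one_updateRow]
  have hsub : Icc 0 1 ∩ {z : ι → ℝ | c ⬝ᵥ z ∈ Ico a b} ⊆
      T ⁻¹' univ.pi (Function.update (fun _ ↦ Icc 0 1) j (Ico a b)) := by
    rintro z ⟨⟨h0, h1⟩, hz⟩ k -
    rcases eq_or_ne k j with rfl | hk
    · simpa [hT] using hz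
    · simpa [hT, hk] using ⟨h0 k, h1 k⟩
  calc _ ≤ _ := measure_mono hsub
    _ = ENNReal.ofReal |(c j)⁻¹| * ENNReal.ofReal (b - a) := by
      rw [Measure.addHaar_preimage_linearMap _ (hdet ▸ hj), hdet, volume_pi_update_Icc,
        Real.volume_Ico]
    _ = ENNReal.ofReal ((b - a) / |c j|) := by
      rw [← ENNReal.ofReal_mul (abs_nonneg _), abs_inv, div_eq_inv_mul]

end Cube

section Pyramid

variable {d : ℕ} {s : ℝ} {i : Fin d}

def pyrNormal (s : ℝ) (i j : Fin d) (ε : ℝ) : Fin d → ℝ := Pi.single i s + Pi.single j ε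

def pyrSlab (s : ℝ) (i j : Fin d) (ε : ℝ) (w w' : Fin d → ℝ) : Set (Fin d → ℝ) :=
  {z | pyrNormal s i j ε ⬝ᵥ z ∈ Ico (pyrNormal s i j ε ⬝ᵥ w) (pyrNormal s i j ε ⬝ᵥ w')}

theorem pyrNormal_dotProduct (j : Fin d) (ε : ℝ) (z : Fin d → ℝ) :
    pyrNormal s i j ε ⬝ᵥ z = s * z i + ε * z j := by
  simp [pyrNormal, add_dotProduct]

theorem mem_Pyr_iff_forall_abs_le (hs : s = 1 ∨ s = -1) {w z : Fin d → ℝ} :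
    z ∈ Pyr s i w ↔ ∀ j, |z j - w j| ≤ s * (z i - w i) := by
  refine ⟨fun h j ↦ h ▸ abs_apply_le_norm (z - w) j, fun h ↦ le_antisymm ?_ ?_⟩
  · exact (mul_le_abs_of_eq_one_or_eq_neg_one hs _).trans (abs_apply_le_norm (z - w) i)
  · exact pi_norm_le_iff_of_nonneg ((abs_nonneg _).trans (h i)) |>.2 h

theorem mem_Pyr_iff_forall_dotProduct_le (hs : s = 1 ∨ s = -1) {w z : Fin d → ℝ} :
    z ∈ Pyr s i w ↔ ∀ j, ∀ ε ∈ ({1, -1} : Finset ℝ),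
      pyrNormal s i j ε ⬝ᵥ w ≤ pyrNormal s i j ε ⬝ᵥ z := by
  simp only [mem_Pyr_iff_forall_abs_le hs, abs_le, Finset.mem_insert, Finset.mem_singleton,
    forall_eq_or_imp, forall_eq, pyrNormal_dotProduct]
  refine forall_congr' fun j ↦ ?_
  constructor <;> rintro ⟨h₁, h₂⟩ <;> constructor <;> linarith

theorem Pyr_diff_subset (hs : s = 1 ∨ s = -1) (w w' : Fin d → ℝ) :
    Pyr s i w \ Pyr s i w' ⊆ ⋃ j, ⋃ ε ∈ ({1, -1} : Finset ℝ), pyrSlab s i j ε w w' := by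
  rintro z ⟨hw, hw'⟩
  rw [mem_Pyr_iff_forall_dotProduct_le hs] at hw hw'
  push Not at hw'
  obtain ⟨j, ε, hε, hlt⟩ := hw'
  exact mem_iUnion₂.2 ⟨j, ε, mem_iUnion.2 ⟨hε, hw j ε hε, hlt⟩⟩

theorem volume_Icc_inter_pyrSlab_le (hs : s = 1 ∨ s = -1) {ε : ℝ}
    (hε : ε ∈ ({1, -1} : Finset ℝ)) (j : Fin d) (w w' : Fin d → ℝ) :
    volume (Icc 0 1 ∩ pyrSlab s i j ε w w') ≤
      ENNReal.ofReal (if j = i then ‖w' - w‖ else 2 * ‖w' - w‖) := by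
  unfold pyrSlab
  set u := w' - w
  have hwidth : pyrNormal s i j ε ⬝ᵥ w' - pyrNormal s i j ε ⬝ᵥ w = s * u i + ε * u j := by
    simp only [u, pyrNormal_dotProduct, Pi.sub_apply]; ring
  rw [Finset.mem_insert, Finset.mem_singleton] at hε
  have hui := (mul_le_abs_of_eq_one_or_eq_neg_one hs (u i)).trans (abs_apply_le_norm u i)
  have huj := (mul_le_abs_of_eq_one_or_eq_neg_one hε (u j)).trans (abs_apply_le_norm u j)
  rcases eq_or_ne j i with rfl | hji
  · rw [if_pos rfl]
    have hn : pyrNormal s j j ε = Pi.single j (s + ε) := by simp [pyrNormal, Pi.single_add]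
    rw [hn] at hwidth ⊢
    rcases eq_or_ne (s + ε) 0 with h0 | h0
    · simp [h0] -- the normal vanishes, so the slab is empty
    have h2 : |s + ε| = 2 := by
      rcases hs with rfl | rfl <;> rcases hε with rfl | rfl <;> norm_num at h0 <;> norm_num
    refine (volume_Icc_inter_dotProduct_mem_Ico_le _ (j := j) (by simpa using h0) _ _).trans
      (ENNReal.ofReal_le_ofReal ?_)
    rw [hwidth, Pi.single_eq_same, h2]
    linarith
  · rw [if_neg hji]
    have hpivot : pyrNormal s i j ε j = ε := by simp [pyrNormal, hji]
    refine (volume_Icc_inter_dotProduct_mem_Ico_le _ (j := j) ?_ _ _).trans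
      (ENNReal.ofReal_le_ofReal ?_)
    · rw [hpivot]; rintro rfl; norm_num at hε
    · rw [hwidth, hpivot, (by rcases hε with rfl | rfl <;> norm_num : |ε| = 1), div_one]
      linarith

theorem volume_inter_Pyr_le {X : Set (Fin d → ℝ)} (hX : X ⊆ Icc 0 1) (hs : s = 1 ∨ s = -1)
    (w w' : Fin d → ℝ) :
    volume (X ∩ Pyr s i w) ≤
      volume (X ∩ Pyr s i w') + ENNReal.ofReal ((4 * d - 2) * ‖w' - w‖) := by
  have hcover : X ∩ Pyr s i w ⊆
      (X ∩ Pyr s i w') ∪ ⋃ j, ⋃ ε ∈ ({1, -1} : Finset ℝ), Icc 0 1 ∩ pyrSlab s i j ε w w' := by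
    rintro z ⟨hzX, hz⟩
    by_cases hz' : z ∈ Pyr s i w'
    · exact Or.inl ⟨hzX, hz'⟩
    · obtain ⟨j, hj⟩ := mem_iUnion.1 (Pyr_diff_subset hs w w' ⟨hz, hz'⟩)
      obtain ⟨ε, hε⟩ := mem_iUnion₂.1 hj
      exact Or.inr (mem_iUnion.2 ⟨j, mem_iUnion₂.2 ⟨ε, hε.1, hX hzX, hε.2⟩⟩)
  set b : Fin d → ℝ := fun j ↦ if j = i then ‖w' - w‖ else 2 * ‖w' - w‖
  have hb : ∀ j, 0 ≤ b j := fun j ↦ by simp only [b]; split_ifs <;> positivity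
  have hsum : ∑ j, ∑ _ε ∈ ({1, -1} : Finset ℝ), b j = (4 * d - 2) * ‖w' - w‖ := by
    simp only [b, Finset.sum_const, Finset.card_pair (show (1 : ℝ) ≠ -1 by norm_num)]
    simp [Finset.sum_ite, Finset.filter_ne', Finset.filter_eq', Nat.cast_pred i.pos]
    ring
  calc volume (X ∩ Pyr s i w)
      ≤ volume (X ∩ Pyr s i w') +
          ∑ j, ∑ ε ∈ ({1, -1} : Finset ℝ), volume (Icc 0 1 ∩ pyrSlab s i j ε w w') :=
        (measure_mono hcover).trans <| (measure_union_le _ _).trans <| add_le_add le_rfl <|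
          (measure_iUnion_fintype_le _ _).trans <| Finset.sum_le_sum fun j _ ↦
            measure_biUnion_finset_le _ _
    _ ≤ volume (X ∩ Pyr s i w') + ∑ j, ∑ _ε ∈ ({1, -1} : Finset ℝ), ENNReal.ofReal (b j) := by
        gcongr with j _ ε hε
        exact volume_Icc_inter_pyrSlab_le hs hε j w w'
    _ = volume (X ∩ Pyr s i w') + ENNReal.ofReal ((4 * d - 2) * ‖w' - w‖) := by
        rw [← hsum, ENNReal.ofReal_sum_of_nonneg fun j _ ↦ Finset.sum_nonneg fun _ _ ↦ hb j]
        simp_rw [ENNReal.ofReal_sum_of_nonneg fun _ _ ↦ hb _]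

end Pyramid

theorem four_mul_sub_two_le_sqrt {x : ℝ} (hx : 1 ≤ x) : 4 * x - 2 ≤ √(8 * x ^ 3) := by
  rw [Real.le_sqrt' (by linarith)]
  nlinarith [mul_nonneg (by linarith : 0 ≤ x) (sq_nonneg (x - 1))]

theorem precision_lemma_general {d : ℕ} (X : Set (Fin d → ℝ))
    (hXsub : X ⊆ Set.Icc 0 1)
    (s : ℝ) (hs : s = 1 ∨ s = -1) (i : Fin d) (y u : Fin d → ℝ) :
    |(volume (X ∩ Pyr s i y)).toReal - (volume (X ∩ Pyr s i (y + u))).toReal| ≤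
      Real.sqrt (8 * d ^ 3) * ‖u‖ := by
  have hfin : ∀ w, volume (X ∩ Pyr s i w) ≠ ⊤ := fun w ↦
    measure_ne_top_of_subset (inter_subset_left.trans hXsub) isCompact_Icc.measure_ne_top
  have hd : (1 : ℝ) ≤ d := by exact_mod_cast i.pos
  have hK : 0 ≤ (4 * d - 2 : ℝ) * ‖u‖ := mul_nonneg (by linarith) (norm_nonneg u)
  have h₁ := volume_inter_Pyr_le (i := i) hXsub hs y (y + u)
  have h₂ := volume_inter_Pyr_le (i := i) hXsub hs (y + u) y
  rw [add_sub_cancel_left] at h₁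
  rw [sub_add_cancel_left, norm_neg] at h₂
  have h₁' := ENNReal.toReal_le_add h₁ (hfin _) ENNReal.ofReal_ne_top
  have h₂' := ENNReal.toReal_le_add h₂ (hfin _) ENNReal.ofReal_ne_top
  rw [ENNReal.toReal_ofReal hK] at h₁' h₂'
  calc _ ≤ (4 * d - 2 : ℝ) * ‖u‖ := abs_sub_le_iff.2 ⟨by linarith, by linarith⟩
    _ ≤ √(8 * d ^ 3) * ‖u‖ := by
      gcongr
      exact four_mul_sub_two_le_sqrt hd

theorem precision_lemma {d : ℕ} (X : Set (Fin d → ℝ))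
    (hXmeas : MeasurableSet X) (hXsub : X ⊆ Set.Icc 0 1)
    (s : ℝ) (hs : s = 1 ∨ s = -1) (i : Fin d) (y u : Fin d → ℝ) :
    |(volume (X ∩ Pyr s i y)).toReal - (volume (X ∩ Pyr s i (y + u))).toReal| ≤
      Real.sqrt (8 * d ^ 3) * ‖u‖ :=
  precision_lemma_general X hXsub s hs i y u
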